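/- arXiv:1602.07828 — 9 statements merged into one kernel-verified Lean document; each statement's English description precedes it below -/
import Mathlib

section
/- Let (A, ∧, ∼, ∽, 1) be a pseudo equality algebra. Then for all x, y ∈ A: (1) x ≤ ((x∧y) ∼ x) ∽ y and x ≤ y ∼ (x ∽ (x∧y)); (2) y ≤ ((x∧y) ∼ x) ∽ y and y ≤ y ∼ (x ∽ (x∧y)); (3) x ∼ y ≤ (x∧y) ∼ y and x ∽ y ≤ x ∽ (x∧y). -/
/-! Instantiating (A4)–(A6) at `1 = ⊤`, where `x ∼ ⊤ = x` and `⊤ ∽ x = x` collapse one side to a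
plain variable, gives `y ≤ (x ∧ y) ∼ x`, `y ≤ x ∽ (x ∧ y)`, `x ≤ ((x ∧ y) ∼ x) ∽ (x ∧ y)` and
`x ≤ (x ∧ y) ∼ (x ∽ (x ∧ y))`; (1) and (2) follow from these by the monotonicity (A4), and (3) is
(A5) with `z = y`, resp. `z = x`. -/

/-- A pseudo equality algebra (JK-algebra): a meet-semilattice with top element `⊤`
(playing the role of `1`) equipped with two equality operations `sim` (`∼`) and
`bsim` (`∽`) satisfying axioms (A2)–(A7). -/
class PseudoEqualityAlgebra (A : Type*) extends SemilatticeInf A, OrderTop A where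
  sim : A → A → A
  bsim : A → A → A
  sim_self : ∀ x : A, sim x x = ⊤
  bsim_self : ∀ x : A, bsim x x = ⊤
  sim_top : ∀ x : A, sim x ⊤ = x
  top_bsim : ∀ x : A, bsim ⊤ x = x
  A4a : ∀ x y z : A, x ≤ y → y ≤ z → sim x z ≤ sim y z
  A4b : ∀ x y z : A, x ≤ y → y ≤ z → sim x z ≤ sim x y
  A4c : ∀ x y z : A, x ≤ y → y ≤ z → bsim z x ≤ bsim z y
  A4d : ∀ x y z : A, x ≤ y → y ≤ z → bsim z x ≤ bsim y x
  A5a : ∀ x y z : A, sim x y ≤ sim (x ⊓ z) (y ⊓ z)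
  A5b : ∀ x y z : A, bsim x y ≤ bsim (x ⊓ z) (y ⊓ z)
  A6a : ∀ x y z : A, sim x y ≤ bsim (sim z x) (sim z y)
  A6b : ∀ x y z : A, bsim x y ≤ sim (bsim x z) (bsim y z)
  A7a : ∀ x y z : A, sim x y ≤ sim (sim x z) (sim y z)
  A7b : ∀ x y z : A, bsim x y ≤ bsim (bsim z x) (bsim z y)

open PseudoEqualityAlgebra

namespace PseudoEqualityAlgebra

variable {A : Type*} [PseudoEqualityAlgebra A] {x y : A}

theorem le_sim_inf (x y : A) : x ≤ sim (x ⊓ y) y := by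
  simpa only [sim_top, top_inf_eq] using A5a x ⊤ y

theorem le_bsim_inf (x y : A) : x ≤ bsim y (x ⊓ y) := by
  simpa only [top_bsim, top_inf_eq] using A5b ⊤ x y

theorem le_bsim_sim (x y : A) : x ≤ bsim (sim y x) y := by
  simpa only [sim_top] using A6a x ⊤ y

theorem le_sim_bsim (x y : A) : x ≤ sim y (bsim x y) := by
  simpa only [top_bsim] using A6b ⊤ x y

theorem le_bsim_of_le (h : x ≤ y) : x ≤ bsim y x := by
  simpa only [top_bsim] using A4d x y ⊤ h le_top

theorem le_sim_of_le (h : x ≤ y) : x ≤ sim x y := by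
  simpa only [sim_top] using A4b x y ⊤ h le_top

theorem sim_le_sim_inf (x y : A) : sim x y ≤ sim (x ⊓ y) y := by
  simpa only [inf_idem] using A5a x y y

theorem bsim_le_bsim_inf (x y : A) : bsim x y ≤ bsim x (x ⊓ y) := by
  simpa only [inf_idem, inf_comm y x] using A5b x y x

end PseudoEqualityAlgebra

/-- Proposition 2.3 (3)–(5): in any pseudo equality algebra,
(1) `x ≤ ((x∧y) ∼ x) ∽ y` and `x ≤ y ∼ (x ∽ (x∧y))`;
(2) `y ≤ ((x∧y) ∼ x) ∽ y` and `y ≤ y ∼ (x ∽ (x∧y))`;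
(3) `x ∼ y ≤ (x∧y) ∼ y` and `x ∽ y ≤ x ∽ (x∧y)`. -/
theorem stmt0 {A : Type*} [PseudoEqualityAlgebra A] (x y : A) :
    (x ≤ bsim (sim (x ⊓ y) x) y ∧ x ≤ sim y (bsim x (x ⊓ y))) ∧
    (y ≤ bsim (sim (x ⊓ y) x) y ∧ y ≤ sim y (bsim x (x ⊓ y))) ∧
    (sim x y ≤ sim (x ⊓ y) y ∧ bsim x y ≤ bsim x (x ⊓ y)) := by
  have hy_sim : y ≤ sim (x ⊓ y) x := by simpa only [inf_comm y x] using le_sim_inf y x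
  have hy_bsim : y ≤ bsim x (x ⊓ y) := by simpa only [inf_comm y x] using le_bsim_inf y x
  refine ⟨⟨?_, ?_⟩, ⟨le_bsim_of_le hy_sim, le_sim_of_le hy_bsim⟩,
    sim_le_sim_inf x y, bsim_le_bsim_inf x y⟩
  · exact (le_bsim_sim x (x ⊓ y)).trans (A4c _ _ _ inf_le_right hy_sim)
  · exact (le_sim_bsim x (x ⊓ y)).trans (A4a _ _ _ inf_le_right hy_bsim)
end

section
/- Let (A, ∧, ∼, ∽, 1) be a pseudo equality algebra and let x, y ∈ A with x ≤ y. Then for all z ∈ A: (1) (y∧z) ∼ y ≤ (x∧z) ∼ x and y ∽ (y∧z) ≤ x ∽ (x∧z); (2) (z∧x) ∼ z ≤ (z∧y) ∼ z and z ∽ (z∧x) ≤ z ∽ (z∧y). -/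
open PseudoEqualityAlgebra

theorem inf_inf_eq_inf_of_le {α : Type*} [SemilatticeInf α] {x y : α} (hxy : x ≤ y) (z : α) :
    y ⊓ z ⊓ x = x ⊓ z := by
  rw [inf_right_comm, inf_eq_right.mpr hxy, inf_comm]

namespace PseudoEqualityAlgebra

variable {A : Type*} [PseudoEqualityAlgebra A] {x y : A}

theorem sim_inf_self_le_of_le (hxy : x ≤ y) (z : A) : sim (y ⊓ z) y ≤ sim (x ⊓ z) x := by
  simpa only [inf_inf_eq_inf_of_le hxy, inf_eq_right.mpr hxy] using A5a (y ⊓ z) y x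

theorem bsim_self_inf_le_of_le (hxy : x ≤ y) (z : A) : bsim y (y ⊓ z) ≤ bsim x (x ⊓ z) := by
  simpa only [inf_inf_eq_inf_of_le hxy, inf_eq_right.mpr hxy] using A5b y (y ⊓ z) x

end PseudoEqualityAlgebra

/-- Proposition 2.4: in a pseudo equality algebra, if `x ≤ y` then for all `z`:
(1) `(y∧z) ∼ y ≤ (x∧z) ∼ x` and `y ∽ (y∧z) ≤ x ∽ (x∧z)`;
(2) `(z∧x) ∼ z ≤ (z∧y) ∼ z` and `z ∽ (z∧x) ≤ z ∽ (z∧y)`. -/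
theorem stmt1 {A : Type*} [PseudoEqualityAlgebra A] (x y : A) (hxy : x ≤ y) (z : A) :
    (sim (y ⊓ z) y ≤ sim (x ⊓ z) x ∧ bsim y (y ⊓ z) ≤ bsim x (x ⊓ z)) ∧
    (sim (z ⊓ x) z ≤ sim (z ⊓ y) z ∧ bsim z (z ⊓ x) ≤ bsim z (z ⊓ y)) :=
  ⟨⟨sim_inf_self_le_of_le hxy z, bsim_self_inf_le_of_le hxy z⟩,
    A4a _ _ _ (inf_le_inf_left z hxy) inf_le_left,
    A4c _ _ _ (inf_le_inf_left z hxy) inf_le_left⟩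
end

section
/- Let (B, ∧, →, ⇝, 1) be a pseudo BCK(pD)-meet-semilattice and let D be a deductive system of B. Then D is a subalgebra of B: 1 ∈ D, and for all x, y ∈ D one has x ∧ y ∈ D, x → y ∈ D, and x ⇝ y ∈ D. -/
/-- A pseudo BCK-meet-semilattice: a meet-semilattice with top element `⊤`
(playing the role of `1`) equipped with two implications `imp` (`→`) and `limp` (`⇝`)
satisfying the pseudo BCK axioms; (B3), (B4), (B5) are built into the order structure. -/
class PseudoBCKMeetSemilattice (B : Type*) extends SemilatticeInf B, OrderTop B where
  imp : B → B → B
  limp : B → B → B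
  B1a : ∀ x y z : B, imp x y ≤ limp (imp y z) (imp x z)
  B1b : ∀ x y z : B, limp x y ≤ imp (limp y z) (limp x z)
  B2a : ∀ x y : B, x ≤ limp (imp x y) y
  B2b : ∀ x y : B, x ≤ imp (limp x y) y
  le_iff_imp : ∀ x y : B, x ≤ y ↔ imp x y = ⊤
  le_iff_limp : ∀ x y : B, x ≤ y ↔ limp x y = ⊤

open PseudoBCKMeetSemilattice

/-- A deductive system of a pseudo BCK-meet-semilattice. -/
def IsDeductiveSystem {B : Type*} [PseudoBCKMeetSemilattice B] (D : Set B) : Prop :=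
  ⊤ ∈ D ∧ ∀ x y : B, x ∈ D → imp x y ∈ D → y ∈ D
/-! In a deductive system `D`, membership is upward closed, and `y ≤ x → y`, `y ≤ x ⇝ y`, so
`D` is closed under both implications. For meets, (pD) gives `x → (x ∧ y) = (x → x) ∧ (x → y) = x → y`,
which lies in `D` when `y` does; modus ponens from `x ∈ D` then yields `x ∧ y ∈ D`. -/

namespace PseudoBCKMeetSemilattice

variable {B : Type*} [PseudoBCKMeetSemilattice B]

theorem imp_self (x : B) : imp x x = ⊤ := (le_iff_imp x x).1 le_rfl

theorem limp_self (x : B) : limp x x = ⊤ := (le_iff_limp x x).1 le_rfl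

theorem imp_top (x : B) : imp x ⊤ = ⊤ := (le_iff_imp x ⊤).1 le_top

theorem limp_top (x : B) : limp x ⊤ = ⊤ := (le_iff_limp x ⊤).1 le_top

theorem top_imp (y : B) : imp ⊤ y = y := by
  refine le_antisymm ?_ ?_
  · exact (le_iff_limp _ _).2 (top_le_iff.1 (B2a ⊤ y))
  · simpa only [limp_self] using B2b y y

theorem top_limp (y : B) : limp ⊤ y = y := by
  refine le_antisymm ?_ ?_
  · exact (le_iff_imp _ _).2 (top_le_iff.1 (B2b ⊤ y))
  · simpa only [imp_self] using B2a y y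

theorem le_imp (x y : B) : y ≤ imp x y := by
  have h := B1a x ⊤ y
  rw [imp_top, top_imp] at h
  exact (le_iff_limp _ _).2 (top_le_iff.1 h)

theorem le_limp (x y : B) : y ≤ limp x y := by
  have h := B1b x ⊤ y
  rw [limp_top, top_limp] at h
  exact (le_iff_imp _ _).2 (top_le_iff.1 h)

theorem imp_inf_self_right (hpD : ∀ x y z : B, imp x (y ⊓ z) = imp x y ⊓ imp x z) (x y : B) :
    imp x (x ⊓ y) = imp x y := by
  rw [hpD, imp_self, top_inf_eq]

end PseudoBCKMeetSemilattice

namespace IsDeductiveSystem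

variable {B : Type*} [PseudoBCKMeetSemilattice B] {D : Set B}

theorem mem_of_le (hD : IsDeductiveSystem D) {x y : B} (hx : x ∈ D) (hxy : x ≤ y) : y ∈ D :=
  hD.2 x y hx ((le_iff_imp x y).1 hxy ▸ hD.1)

theorem imp_mem (hD : IsDeductiveSystem D) (x : B) {y : B} (hy : y ∈ D) : imp x y ∈ D :=
  hD.mem_of_le hy (le_imp x y)

theorem limp_mem (hD : IsDeductiveSystem D) (x : B) {y : B} (hy : y ∈ D) : limp x y ∈ D :=
  hD.mem_of_le hy (le_limp x y)

theorem inf_mem (hpD : ∀ x y z : B, imp x (y ⊓ z) = imp x y ⊓ imp x z)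
    (hD : IsDeductiveSystem D) {x y : B} (hx : x ∈ D) (hy : y ∈ D) : x ⊓ y ∈ D :=
  hD.2 x _ hx (imp_inf_self_right hpD x y ▸ hD.imp_mem x hy)

end IsDeductiveSystem

theorem stmt3_general {B : Type*} [PseudoBCKMeetSemilattice B]
    (hpD1 : ∀ x y z : B, imp x (y ⊓ z) = imp x y ⊓ imp x z)
    (D : Set B) (hD : IsDeductiveSystem D) :
    ⊤ ∈ D ∧ ∀ x ∈ D, ∀ y ∈ D, x ⊓ y ∈ D ∧ imp x y ∈ D ∧ limp x y ∈ D :=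
  ⟨hD.1, fun x hx _ hy => ⟨hD.inf_mem hpD1 hx hy, hD.imp_mem x hy, hD.limp_mem x hy⟩⟩

/-- Lemma 2.8: every deductive system of a pseudo BCK(pD)-meet-semilattice `B` is a
subalgebra of `B`: `1 ∈ D`, and `D` is closed under `∧`, `→` and `⇝`. -/
theorem stmt3 {B : Type*} [PseudoBCKMeetSemilattice B]
    (hpD1 : ∀ x y z : B, imp x (y ⊓ z) = imp x y ⊓ imp x z)
    (hpD2 : ∀ x y z : B, limp x (y ⊓ z) = limp x y ⊓ limp x z)
    (D : Set B) (hD : IsDeductiveSystem D) :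
    ⊤ ∈ D ∧ ∀ x ∈ D, ∀ y ∈ D, x ⊓ y ∈ D ∧ imp x y ∈ D ∧ limp x y ∈ D :=
  stmt3_general hpD1 D hD
end

section
/- Every pseudo BCK(pD)-meet-semilattice is a pseudo BCK(pC)-meet-semilattice; that is, if (B, ∧, →, ⇝, 1) is a pseudo BCK-meet-semilattice satisfying x → (y∧z) = (x → y) ∧ (x → z) and x ⇝ (y∧z) = (x ⇝ y) ∧ (x ⇝ z) for all x, y, z ∈ B, then x → y ≤ (x∧z) → (y∧z) and x ⇝ y ≤ (x∧z) ⇝ (y∧z) for all x, y, z ∈ B. -/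
open PseudoBCKMeetSemilattice

namespace PseudoBCKMeetSemilattice

variable {B : Type*} [PseudoBCKMeetSemilattice B]

theorem imp_le_imp_right {x y : B} (h : x ≤ y) (z : B) : imp y z ≤ imp x z := by
  have hxy : imp x y = ⊤ := (le_iff_imp x y).1 h
  refine (le_iff_limp _ _).2 (top_unique ?_)
  simpa only [hxy] using B1a x y z

theorem limp_le_limp_right {x y : B} (h : x ≤ y) (z : B) : limp y z ≤ limp x z := by
  have hxy : limp x y = ⊤ := (le_iff_limp x y).1 h
  refine (le_iff_imp _ _).2 (top_unique ?_)
  simpa only [hxy] using B1b x y z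

theorem imp_le_imp_inf_inf (hpD : ∀ x y z : B, imp x (y ⊓ z) = imp x y ⊓ imp x z)
    (x y z : B) : imp x y ≤ imp (x ⊓ z) (y ⊓ z) :=
  calc imp x y ≤ imp (x ⊓ z) y := imp_le_imp_right inf_le_left y
    _ = imp (x ⊓ z) y ⊓ imp (x ⊓ z) z := by rw [(le_iff_imp _ _).1 inf_le_right, inf_top_eq]
    _ = imp (x ⊓ z) (y ⊓ z) := (hpD _ _ _).symm

theorem limp_le_limp_inf_inf (hpD : ∀ x y z : B, limp x (y ⊓ z) = limp x y ⊓ limp x z)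
    (x y z : B) : limp x y ≤ limp (x ⊓ z) (y ⊓ z) :=
  calc limp x y ≤ limp (x ⊓ z) y := limp_le_limp_right inf_le_left y
    _ = limp (x ⊓ z) y ⊓ limp (x ⊓ z) z := by rw [(le_iff_limp _ _).1 inf_le_right, inf_top_eq]
    _ = limp (x ⊓ z) (y ⊓ z) := (hpD _ _ _).symm

end PseudoBCKMeetSemilattice

/-- Proposition 2.10: every pseudo BCK(pD)-meet-semilattice is a
pseudo BCK(pC)-meet-semilattice. -/
theorem stmt4 {B : Type*} [PseudoBCKMeetSemilattice B]
    (hpD1 : ∀ x y z : B, imp x (y ⊓ z) = imp x y ⊓ imp x z)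
    (hpD2 : ∀ x y z : B, limp x (y ⊓ z) = limp x y ⊓ limp x z) :
    ∀ x y z : B, imp x y ≤ imp (x ⊓ z) (y ⊓ z) ∧ limp x y ≤ limp (x ⊓ z) (y ⊓ z) :=
  fun x y z => ⟨imp_le_imp_inf_inf hpD1 x y z, limp_le_limp_inf_inf hpD2 x y z⟩
end

section
/- Let (A, ∧, ∼, ∽, a, 1) be a pointed a-compatible pseudo equality algebra. Then the map γ: A → A defined by γ(x) = x^{∼a ∽a} is a closure operator on A: (i) x ≤ γ(x) for all x; (ii) x ≤ y implies γ(x) ≤ γ(y); (iii) γ(γ(x)) = γ(x) for all x. -/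
open PseudoEqualityAlgebra

theorem PseudoEqualityAlgebra.le_bsim_sim_s9 {A : Type*} [PseudoEqualityAlgebra A] (z x : A) :
    x ≤ bsim (sim z x) z := by
  simpa only [sim_top] using A6a x ⊤ z

theorem stmt9_general {A : Type*} [PseudoEqualityAlgebra A] (a : A)
    (hC3 : ∀ x y : A,
      bsim (sim a (x ⊓ y)) a = bsim (sim a x) a ⊓ bsim (sim a y) a)
    (hC4a : ∀ x : A, sim a (bsim (sim a x) a) = sim a x) :
    (∀ x : A, x ≤ bsim (sim a x) a) ∧
    (∀ x y : A, x ≤ y → bsim (sim a x) a ≤ bsim (sim a y) a) ∧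
    (∀ x : A, bsim (sim a (bsim (sim a x) a)) a = bsim (sim a x) a) :=
  ⟨le_bsim_sim_s9 a,
    fun _ _ hxy => OrderHomClass.mono (InfHom.mk (fun x => bsim (sim a x) a) hC3) hxy,
    fun x => by rw [hC4a]⟩

/-- Proposition 4.12: if `(A, ∧, ∼, ∽, a, 1)` is a pointed `a`-compatible pseudo equality
algebra (i.e. `(∼a,∽a)`-good and satisfying (C1)–(C4), where `x^{∼a} = a ∼ x` and
`x^{∽a} = x ∽ a`), then `γ(x) = x^{∼a ∽a}` is a closure operator on `A`:
it is extensive, monotone and idempotent. -/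
theorem stmt9 {A : Type*} [PseudoEqualityAlgebra A] (a : A)
    (hgood : ∀ x : A, bsim (sim a x) a = sim a (bsim x a))
    (hC1 : ∀ x y : A,
      bsim (sim a (sim x y)) a = sim (bsim (sim a x) a) (bsim (sim a y) a))
    (hC2 : ∀ x y : A,
      bsim (sim a (bsim x y)) a = bsim (bsim (sim a x) a) (bsim (sim a y) a))
    (hC3 : ∀ x y : A,
      bsim (sim a (x ⊓ y)) a = bsim (sim a x) a ⊓ bsim (sim a y) a)
    (hC4a : ∀ x : A, sim a (bsim (sim a x) a) = sim a x)
    (hC4b : ∀ x : A, bsim (sim a (bsim x a)) a = bsim x a) :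
    (∀ x : A, x ≤ bsim (sim a x) a) ∧
    (∀ x y : A, x ≤ y → bsim (sim a x) a ≤ bsim (sim a y) a) ∧
    (∀ x : A, bsim (sim a (bsim (sim a x) a)) a = bsim (sim a x) a) :=
  stmt9_general a hC3 hC4a
end

section
/- Let (A, ∧, ∼, ∽, a, 1) be a pointed pseudo equality algebra with a ≠ 1 and let s be a Bosbach state on A. Then: (1) for all x, y ∈ A with x ≤ y, s(x ∼ y) = s(y ∽ x) = 1 + s(x) − s(y) and s(x) ≤ s(y); (2) for all x ≤ a, s(x) = 0 and s(x ∼ a) = s(a ∽ x) = 1; (3) for all x ≥ a, s(x^{∼a}) = s(x^{∽a}) = 1 − s(x) and s(x^{∼a ∽a}) = s(x^{∽a ∼a}) = s(x). -/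
open PseudoEqualityAlgebra

/-- A Bosbach state on a pointed pseudo equality algebra `(A, ∧, ∼, ∽, a, 1)`:
a function `s : A → [0,1] ⊆ ℝ` satisfying (BS1), (BS2) and (BS3). -/
def IsBosbachState {A : Type*} [PseudoEqualityAlgebra A] (a : A) (s : A → ℝ) : Prop :=
  (∀ x : A, s x ∈ Set.Icc (0 : ℝ) 1) ∧
  (∀ x y : A, s x + s (sim (x ⊓ y) x) = s y + s (sim (x ⊓ y) y)) ∧
  (∀ x y : A, s x + s (bsim x (x ⊓ y)) = s y + s (bsim y (x ⊓ y))) ∧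
  s (⊤ : A) = 1 ∧ s a = 0

namespace IsBosbachState

variable {A : Type*} [PseudoEqualityAlgebra A] {a : A} {s : A → ℝ} (hs : IsBosbachState a s)
include hs

theorem nonneg (x : A) : 0 ≤ s x := (hs.1 x).1

theorem le_one (x : A) : s x ≤ 1 := (hs.1 x).2

theorem map_top : s ⊤ = 1 := hs.2.2.2.1

theorem map_point : s a = 0 := hs.2.2.2.2

theorem map_sim_of_le {x y : A} (h : x ≤ y) : s (sim x y) = 1 + s x - s y := by
  have := hs.2.1 x y
  rw [inf_eq_left.mpr h, sim_self, hs.map_top] at this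
  linarith

theorem map_bsim_of_le {x y : A} (h : x ≤ y) : s (bsim y x) = 1 + s x - s y := by
  have := hs.2.2.1 x y
  rw [inf_eq_left.mpr h, bsim_self, hs.map_top] at this
  linarith

theorem monotone : Monotone s := fun x y h => by
  linarith [hs.map_sim_of_le h, hs.le_one (sim x y)]

theorem map_eq_zero_of_le {x : A} (h : x ≤ a) : s x = 0 :=
  le_antisymm (hs.map_point ▸ hs.monotone h) (hs.nonneg x)

end IsBosbachState

theorem stmt10_general {A : Type*} [PseudoEqualityAlgebra A] (a : A)
    (s : A → ℝ) (hs : IsBosbachState a s) :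
    (∀ x y : A, x ≤ y →
      s (sim x y) = 1 + s x - s y ∧ s (bsim y x) = 1 + s x - s y ∧ s x ≤ s y) ∧
    (∀ x : A, x ≤ a → s x = 0 ∧ s (sim x a) = 1 ∧ s (bsim a x) = 1) ∧
    (∀ x : A, a ≤ x →
      (s (sim a x) = 1 - s x ∧ s (bsim x a) = 1 - s x) ∧
      (s (bsim (sim a x) a) = s x ∧ s (sim a (bsim x a)) = s x)) := by
  have hsa := hs.map_point
  refine ⟨fun x y h => ⟨hs.map_sim_of_le h, hs.map_bsim_of_le h, hs.monotone h⟩, ?_, ?_⟩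
  · intro x h
    have hx := hs.map_eq_zero_of_le h
    refine ⟨hx, ?_, ?_⟩
    · rw [hs.map_sim_of_le h, hx, hsa]; ring
    · rw [hs.map_bsim_of_le h, hx, hsa]; ring
  · intro x h
    have hsim : s (sim a x) = 1 - s x := by rw [hs.map_sim_of_le h, hsa]; ring
    have hbsim : s (bsim x a) = 1 - s x := by rw [hs.map_bsim_of_le h, hsa]; ring
    refine ⟨⟨hsim, hbsim⟩, ?_, ?_⟩
    · rw [hs.map_bsim_of_le (le_sim_of_le h), hsim, hsa]; ring
    · rw [hs.map_sim_of_le (le_bsim_of_le h), hbsim, hsa]; ring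

/-- Proposition 5.2: let `s` be a Bosbach state on a pointed pseudo equality algebra
`(A, ∧, ∼, ∽, a, 1)` with `a ≠ 1`. Then:
(1) for `x ≤ y`, `s(x ∼ y) = s(y ∽ x) = 1 + s(x) − s(y)` and `s(x) ≤ s(y)`;
(2) for `x ≤ a`, `s(x) = 0` and `s(x ∼ a) = s(a ∽ x) = 1`;
(3) for `a ≤ x`, `s(x^{∼a}) = s(x^{∽a}) = 1 − s(x)` and
    `s(x^{∼a ∽a}) = s(x^{∽a ∼a}) = s(x)`. -/
theorem stmt10 {A : Type*} [PseudoEqualityAlgebra A] (a : A) (ha : a ≠ ⊤)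
    (s : A → ℝ) (hs : IsBosbachState a s) :
    (∀ x y : A, x ≤ y →
      s (sim x y) = 1 + s x - s y ∧ s (bsim y x) = 1 + s x - s y ∧ s x ≤ s y) ∧
    (∀ x : A, x ≤ a → s x = 0 ∧ s (sim x a) = 1 ∧ s (bsim a x) = 1) ∧
    (∀ x : A, a ≤ x →
      (s (sim a x) = 1 - s x ∧ s (bsim x a) = 1 - s x) ∧
      (s (bsim (sim a x) a) = s x ∧ s (sim a (bsim x a)) = s x)) :=
  stmt10_general a s hs
end

section
/- Let (A, ∧, ∼, ∽, a, 1) be a pointed pseudo equality algebra with a ≠ 1 and let s: A → [0,1] be a function with s(a) = 0. Then s is a Bosbach state on A if and only if s(y ∼ x) = s(x ∽ y) = 1 − s(x) + s(y) for all x, y ∈ A with y ≤ x. -/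
open PseudoEqualityAlgebra

section BosbachState

variable {A : Type*} [PseudoEqualityAlgebra A] {s : A → ℝ}

theorem sim_eq_one_sub_add_of_le
    (hsim : ∀ x y : A, s x + s (sim (x ⊓ y) x) = s y + s (sim (x ⊓ y) y))
    (htop : s ⊤ = 1) {x y : A} (hyx : y ≤ x) : s (sim y x) = 1 - s x + s y := by
  have h := hsim x y
  rw [inf_eq_right.mpr hyx, sim_self, htop] at h
  linarith

theorem bsim_eq_one_sub_add_of_le
    (hbsim : ∀ x y : A, s x + s (bsim x (x ⊓ y)) = s y + s (bsim y (x ⊓ y)))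
    (htop : s ⊤ = 1) {x y : A} (hyx : y ≤ x) : s (bsim x y) = 1 - s x + s y := by
  have h := hbsim x y
  rw [inf_eq_right.mpr hyx, bsim_self, htop] at h
  linarith

theorem map_top_of_sim_eq_one_sub_add (h : ∀ x y : A, y ≤ x → s (sim y x) = 1 - s x + s y) :
    s ⊤ = 1 := by
  have h' := h ⊤ ⊤ le_rfl
  rw [sim_self] at h'
  linarith

theorem bs1_of_sim_eq_one_sub_add (h : ∀ x y : A, y ≤ x → s (sim y x) = 1 - s x + s y)
    (x y : A) : s x + s (sim (x ⊓ y) x) = s y + s (sim (x ⊓ y) y) := by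
  rw [h x _ inf_le_left, h y _ inf_le_right]
  ring

theorem bs2_of_bsim_eq_one_sub_add (h : ∀ x y : A, y ≤ x → s (bsim x y) = 1 - s x + s y)
    (x y : A) : s x + s (bsim x (x ⊓ y)) = s y + s (bsim y (x ⊓ y)) := by
  rw [h x _ inf_le_left, h y _ inf_le_right]
  ring

end BosbachState

theorem stmt11_general {A : Type*} [PseudoEqualityAlgebra A] (a : A)
    (s : A → ℝ) (hrange : ∀ x : A, s x ∈ Set.Icc (0 : ℝ) 1) (hsa : s a = 0) :
    IsBosbachState a s ↔
      ∀ x y : A, y ≤ x →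
        s (sim y x) = 1 - s x + s y ∧ s (bsim x y) = 1 - s x + s y := by
  constructor
  · rintro ⟨-, hsim, hbsim, htop, -⟩ x y hyx
    exact ⟨sim_eq_one_sub_add_of_le hsim htop hyx, bsim_eq_one_sub_add_of_le hbsim htop hyx⟩
  · intro h
    exact ⟨hrange, bs1_of_sim_eq_one_sub_add fun x y hyx => (h x y hyx).1,
      bs2_of_bsim_eq_one_sub_add fun x y hyx => (h x y hyx).2,
      map_top_of_sim_eq_one_sub_add fun x y hyx => (h x y hyx).1, hsa⟩

/-- Proposition 5.3: let `(A, ∧, ∼, ∽, a, 1)` be a pointed pseudo equality algebra with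
`a ≠ 1` and let `s : A → [0,1]` with `s(a) = 0`. Then `s` is a Bosbach state on `A` iff
`s(y ∼ x) = s(x ∽ y) = 1 − s(x) + s(y)` for all `y ≤ x`. -/
theorem stmt11 {A : Type*} [PseudoEqualityAlgebra A] (a : A) (ha : a ≠ ⊤)
    (s : A → ℝ) (hrange : ∀ x : A, s x ∈ Set.Icc (0 : ℝ) 1) (hsa : s a = 0) :
    IsBosbachState a s ↔
      ∀ x y : A, y ≤ x →
        s (sim y x) = 1 - s x + s y ∧ s (bsim x y) = 1 - s x + s y :=
  stmt11_general a s hrange hsa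
end

section
/- Let (A, ∧, ∼, ∽, 1) be a pseudo equality algebra and let σ: A → A be an internal state of type I or of type II on A. Then: (1) σ(1) = 1; (2) σ(σ(x)) = σ(x) for all x ∈ A; (3) the image σ(A) equals the set of fixed points {x ∈ A : σ(x) = x}; (4) σ(A) is a subalgebra of A, i.e., 1 ∈ σ(A) and σ(A) is closed under ∼, ∽ and ∧. -/
open PseudoEqualityAlgebra

/-- An internal state of type I on a pseudo equality algebra:
axioms (IS1), (IS2), (IS3), (IS4). -/
def IsInternalStateI {A : Type*} [PseudoEqualityAlgebra A] (σ : A → A) : Prop :=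
  (∀ x y : A, x ≤ y → σ x ≤ σ y) ∧
  (∀ x y : A,
    σ (sim (x ⊓ y) x) = sim (σ y) (σ (bsim (sim (x ⊓ y) x) y)) ∧
    σ (bsim x (x ⊓ y)) = bsim (σ (sim y (bsim x (x ⊓ y)))) (σ y)) ∧
  (∀ x y : A,
    σ (sim (σ x) (σ y)) = sim (σ x) (σ y) ∧
    σ (bsim (σ x) (σ y)) = bsim (σ x) (σ y)) ∧
  (∀ x y : A, σ (σ x ⊓ σ y) = σ x ⊓ σ y)

/-- An internal state of type II on a pseudo equality algebra:
axioms (IS1), (IS2'), (IS3), (IS4). -/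
def IsInternalStateII {A : Type*} [PseudoEqualityAlgebra A] (σ : A → A) : Prop :=
  (∀ x y : A, x ≤ y → σ x ≤ σ y) ∧
  (∀ x y : A,
    σ (sim (x ⊓ y) x) = sim (σ y) (σ (bsim (sim (x ⊓ y) y) x)) ∧
    σ (bsim x (x ⊓ y)) = bsim (σ (sim x (bsim y (x ⊓ y)))) (σ y)) ∧
  (∀ x y : A,
    σ (sim (σ x) (σ y)) = sim (σ x) (σ y) ∧
    σ (bsim (σ x) (σ y)) = bsim (σ x) (σ y)) ∧
  (∀ x y : A, σ (σ x ⊓ σ y) = σ x ⊓ σ y)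

/-! Taking `x = y` in (IS3) gives `σ 1 = σ (σ x ∼ σ x) = 1`,
and then `y = 1` gives `σ (σ x) = σ (σ x ∼ σ 1) = σ x ∼ 1 = σ x`. Closure of `σ(A)` under `∼`, `∽`, `∧`
is (IS3) and (IS4) read as membership in the range. -/

theorem Set.range_eq_setOf_apply_eq_self {α : Type*} {f : α → α} (hf : ∀ x, f (f x) = f x) :
    Set.range f = {x | f x = x} :=
  Set.Subset.antisymm (Set.range_subset_iff.2 hf) fun x hx => ⟨x, hx⟩

theorem Set.forall_mem_range_op_mem_range {α : Type*} {f : α → α} {op : α → α → α}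
    (hop : ∀ a b, f (op (f a) (f b)) = op (f a) (f b)) :
    ∀ x ∈ Set.range f, ∀ y ∈ Set.range f, op x y ∈ Set.range f := by
  rintro _ ⟨a, rfl⟩ _ ⟨b, rfl⟩
  exact ⟨_, hop a b⟩

namespace PseudoEqualityAlgebra

variable {A : Type*} [PseudoEqualityAlgebra A] {σ : A → A}

theorem map_top_of_map_sim (hsim : ∀ x y, σ (sim (σ x) (σ y)) = sim (σ x) (σ y)) : σ ⊤ = ⊤ := by
  simpa only [sim_self] using hsim ⊤ ⊤

theorem map_map_of_map_sim (hsim : ∀ x y, σ (sim (σ x) (σ y)) = sim (σ x) (σ y)) (x : A) :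
    σ (σ x) = σ x := by
  simpa only [map_top_of_map_sim hsim, sim_top] using hsim x ⊤

end PseudoEqualityAlgebra

/-- Proposition 6.6: if `σ` is an internal state of type I or type II on a pseudo equality
algebra `A`, then (1) `σ(1) = 1`; (2) `σ(σ(x)) = σ(x)`; (3) `σ(A) = {x : σ(x) = x}`;
(4) `σ(A)` is a subalgebra of `A`. -/
theorem stmt13 {A : Type*} [PseudoEqualityAlgebra A] (σ : A → A)
    (hσ : IsInternalStateI σ ∨ IsInternalStateII σ) :
    σ (⊤ : A) = ⊤ ∧
    (∀ x : A, σ (σ x) = σ x) ∧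
    Set.range σ = {x : A | σ x = x} ∧
    ((⊤ : A) ∈ Set.range σ ∧
      ∀ x ∈ Set.range σ, ∀ y ∈ Set.range σ,
        sim x y ∈ Set.range σ ∧ bsim x y ∈ Set.range σ ∧ x ⊓ y ∈ Set.range σ) := by
  obtain ⟨hsim, hbsim, hinf⟩ : (∀ x y : A, σ (sim (σ x) (σ y)) = sim (σ x) (σ y)) ∧
      (∀ x y : A, σ (bsim (σ x) (σ y)) = bsim (σ x) (σ y)) ∧
      ∀ x y : A, σ (σ x ⊓ σ y) = σ x ⊓ σ y := by
    rcases hσ with ⟨-, -, h3, h4⟩ | ⟨-, -, h3, h4⟩ <;>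
      exact ⟨fun x y => (h3 x y).1, fun x y => (h3 x y).2, h4⟩
  have htop : σ ⊤ = ⊤ := map_top_of_map_sim hsim
  refine ⟨htop, map_map_of_map_sim hsim,
    Set.range_eq_setOf_apply_eq_self (map_map_of_map_sim hsim), ⟨⊤, htop⟩,
    fun x hx y hy => ⟨?_, ?_, ?_⟩⟩
  · exact Set.forall_mem_range_op_mem_range hsim x hx y hy
  · exact Set.forall_mem_range_op_mem_range hbsim x hx y hy
  · exact Set.forall_mem_range_op_mem_range hinf x hx y hy
end

section
/- Let (A, ∧, ∼, ∽, a, 1) be a pointed a-compatible pseudo equality algebra, let Reg_a(A) = {x ∈ A : x^{∼a ∽a} = x^{∽a ∼a} = x} be the set of a-regular elements, and let σ: A → A be a map with σ(Reg_a(A)) ⊆ Reg_a(A), σ(a) = a, which is a state-morphism operator on Reg_a(A) (i.e., for all x, y ∈ Reg_a(A): σ(x ∼ y) = σ(x) ∼ σ(y), σ(x ∽ y) = σ(x) ∽ σ(y), σ(x∧y) = σ(x) ∧ σ(y), and σ(σ(x)) = σ(x)). Then the map σ̃: A → A defined by σ̃(x) = σ(x^{∼a ∽a}) is a state-morphism operator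 on A, and σ̃(x) = σ(x) for every x ∈ Reg_a(A). -/
open PseudoEqualityAlgebra

/-- The set of `a`-regular elements of a pointed pseudo equality algebra:
those `x` with `x^{∼a ∽a} = x^{∽a ∼a} = x`, where `x^{∼a} = a ∼ x`, `x^{∽a} = x ∽ a`. -/
def RegSet {A : Type*} [PseudoEqualityAlgebra A] (a : A) : Set A :=
  {x : A | bsim (sim a x) a = x ∧ sim a (bsim x a) = x}

theorem bsim_sim_mem_regSet {A : Type*} [PseudoEqualityAlgebra A] {a : A}
    (hgood : ∀ x : A, bsim (sim a x) a = sim a (bsim x a))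
    (hC4a : ∀ x : A, sim a (bsim (sim a x) a) = sim a x)
    (hC4b : ∀ x : A, bsim (sim a (bsim x a)) a = bsim x a) (x : A) :
    bsim (sim a x) a ∈ RegSet a :=
  ⟨by rw [hC4a], by rw [hgood x, hC4b, ← hgood x]⟩

theorem stmt19_general {A : Type*} [PseudoEqualityAlgebra A] (a : A)
    (hgood : ∀ x : A, bsim (sim a x) a = sim a (bsim x a))
    (hC1 : ∀ x y : A,
      bsim (sim a (sim x y)) a = sim (bsim (sim a x) a) (bsim (sim a y) a))
    (hC2 : ∀ x y : A,
      bsim (sim a (bsim x y)) a = bsim (bsim (sim a x) a) (bsim (sim a y) a))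
    (hC3 : ∀ x y : A,
      bsim (sim a (x ⊓ y)) a = bsim (sim a x) a ⊓ bsim (sim a y) a)
    (hC4a : ∀ x : A, sim a (bsim (sim a x) a) = sim a x)
    (hC4b : ∀ x : A, bsim (sim a (bsim x a)) a = bsim x a)
    (σ : A → A)
    (hmaps : ∀ x ∈ RegSet a, σ x ∈ RegSet a)
    (hSM1 : ∀ x ∈ RegSet a, ∀ y ∈ RegSet a, σ (sim x y) = sim (σ x) (σ y))
    (hSM2 : ∀ x ∈ RegSet a, ∀ y ∈ RegSet a, σ (bsim x y) = bsim (σ x) (σ y))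
    (hSM3 : ∀ x ∈ RegSet a, ∀ y ∈ RegSet a, σ (x ⊓ y) = σ x ⊓ σ y)
    (hSM4 : ∀ x ∈ RegSet a, σ (σ x) = σ x) :
    (∀ x y : A,
        σ (bsim (sim a (sim x y)) a) =
          sim (σ (bsim (sim a x) a)) (σ (bsim (sim a y) a))) ∧
    (∀ x y : A,
        σ (bsim (sim a (bsim x y)) a) =
          bsim (σ (bsim (sim a x) a)) (σ (bsim (sim a y) a))) ∧
    (∀ x y : A,
        σ (bsim (sim a (x ⊓ y)) a) = σ (bsim (sim a x) a) ⊓ σ (bsim (sim a y) a)) ∧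
    (∀ x : A,
        σ (bsim (sim a (σ (bsim (sim a x) a))) a) = σ (bsim (sim a x) a)) ∧
    (∀ x ∈ RegSet a, σ (bsim (sim a x) a) = σ x) := by
  have hreg := bsim_sim_mem_regSet hgood hC4a hC4b
  refine ⟨fun x y => ?_, fun x y => ?_, fun x y => ?_, fun x => ?_, fun x hx => ?_⟩
  · rw [hC1, hSM1 _ (hreg x) _ (hreg y)]
  · rw [hC2, hSM2 _ (hreg x) _ (hreg y)]
  · rw [hC3, hSM3 _ (hreg x) _ (hreg y)]
  · rw [(hmaps _ (hreg x)).1, hSM4 _ (hreg x)]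
  · rw [hx.1]

/-- Theorem 7.11: let `(A, ∧, ∼, ∽, a, 1)` be a pointed `a`-compatible pseudo equality
algebra and let `σ` map `Reg_a(A)` into itself with `σ(a) = a` and be a state-morphism
operator on `Reg_a(A)`. Then `σ̃(x) = σ(x^{∼a ∽a})` is a state-morphism operator on `A`
whose restriction to `Reg_a(A)` is `σ`. -/
theorem stmt19 {A : Type*} [PseudoEqualityAlgebra A] (a : A)
    (hgood : ∀ x : A, bsim (sim a x) a = sim a (bsim x a))
    (hC1 : ∀ x y : A,
      bsim (sim a (sim x y)) a = sim (bsim (sim a x) a) (bsim (sim a y) a))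
    (hC2 : ∀ x y : A,
      bsim (sim a (bsim x y)) a = bsim (bsim (sim a x) a) (bsim (sim a y) a))
    (hC3 : ∀ x y : A,
      bsim (sim a (x ⊓ y)) a = bsim (sim a x) a ⊓ bsim (sim a y) a)
    (hC4a : ∀ x : A, sim a (bsim (sim a x) a) = sim a x)
    (hC4b : ∀ x : A, bsim (sim a (bsim x a)) a = bsim x a)
    (σ : A → A)
    (hmaps : ∀ x ∈ RegSet a, σ x ∈ RegSet a)
    (hσa : σ a = a)
    (hSM1 : ∀ x ∈ RegSet a, ∀ y ∈ RegSet a, σ (sim x y) = sim (σ x) (σ y))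
    (hSM2 : ∀ x ∈ RegSet a, ∀ y ∈ RegSet a, σ (bsim x y) = bsim (σ x) (σ y))
    (hSM3 : ∀ x ∈ RegSet a, ∀ y ∈ RegSet a, σ (x ⊓ y) = σ x ⊓ σ y)
    (hSM4 : ∀ x ∈ RegSet a, σ (σ x) = σ x) :
    (∀ x y : A,
        σ (bsim (sim a (sim x y)) a) =
          sim (σ (bsim (sim a x) a)) (σ (bsim (sim a y) a))) ∧
    (∀ x y : A,
        σ (bsim (sim a (bsim x y)) a) =
          bsim (σ (bsim (sim a x) a)) (σ (bsim (sim a y) a))) ∧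
    (∀ x y : A,
        σ (bsim (sim a (x ⊓ y)) a) = σ (bsim (sim a x) a) ⊓ σ (bsim (sim a y) a)) ∧
    (∀ x : A,
        σ (bsim (sim a (σ (bsim (sim a x) a))) a) = σ (bsim (sim a x) a)) ∧
    (∀ x ∈ RegSet a, σ (bsim (sim a x) a) = σ x) :=
  stmt19_general a hgood hC1 hC2 hC3 hC4a hC4b σ hmaps hSM1 hSM2 hSM3 hSM4
end
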